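/- arXiv:2002.11505 — 3 statements merged into one kernel-verified Lean document; each statement's English description precedes it below -/
import Mathlib

section
/- For every q ≥ 2 and infinitely many n, there exists a rooted tree with Θ(n) vertices and height O(√n), together with an adversarial execution of a q-relaxed scheduler on the single-source propagation process, in which the frontier size never exceeds 4 and the process performs at least Ω(q·n) total updates. -/
open Finset

structure BPTree (V : Type*) [Fintype V] [DecidableEq V] where
  root : V
  parent : V → V
  parent_root : parent root = root
  reaches : ∀ v, ∃ k, parent^[k] v = root

namespace BPTree

variable {V : Type*} [Fintype V] [DecidableEq V]

/-- The set of children of a vertex; a non-root vertex `v` represents the tree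
edge `(parent v, v)` directed away from the root. -/
def children (T : BPTree V) (v : V) : Finset V :=
  univ.filter fun u => u ≠ T.root ∧ T.parent u = v

/-- Initially the active (nonzero-residual) edges are the edges out of the root. -/
def init (T : BPTree V) : Finset V :=
  T.children T.root

/-- Updating edge `v`: if it is active, it is deactivated and the edges to the
children of `v` become active (a useful update); otherwise nothing happens. -/
def step (T : BPTree V) (A : Finset V) (v : V) : Finset V :=
  if v ∈ A then A.erase v ∪ T.children v else A

/-- The frontier (set of active edges) after performing the updates in `L`. -/
def run (T : BPTree V) (L : List V) : Finset V :=
  L.foldl T.step T.init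

/-- The subsequence of useful updates of an execution, starting from frontier `A`. -/
def usefulList (T : BPTree V) : Finset V → List V → List V
  | _, [] => []
  | A, v :: L => (if v ∈ A then [v] else []) ++ usefulList T (T.step A v) L

/-- Distance from a vertex to the root; the level of the corresponding edge. -/
def depth (T : BPTree V) (v : V) : ℕ :=
  Nat.find (T.reaches v)

/-- Priority key (smaller = higher priority): active edges ordered by level,
inactive edges last. -/
def key (T : BPTree V) (H : ℕ) (A : Finset V) (v : V) : ℕ :=
  if v ∈ A then T.depth v else H + 1

end BPTree

/-- Priority key (smaller = higher priority) for an arbitrary priority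
assignment `prio` on edges: active edges ordered by `prio`, inactive last. -/
def keyP {V : Type*} [Fintype V] [DecidableEq V] (T : BPTree V)
    (prio : V → ℕ) (A : Finset V) (v : V) : ℕ :=
  if v ∈ A then prio v else (∑ w, prio w) + 1


/-!
Use a comb whose teeth are paths of length `b = √n`, labelled so that every vertex is larger
than its parent: the spine is formed by the multiples of `b + 1`, and spine vertex `(b + 1) * i`
carries the side path `(b + 1) * i + 1, …, (b + 1) * i + b`. Processing `1, 2, …, n` in
increasing order is then an execution without wasted updates, in which the active edges after
`s` steps are the `v > s` whose parent is `≤ s`: the edge `s + 1` and at most one spine edge.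
The depth of `v` is `v / (b + 1) + v % (b + 1) ≤ 2 √n`.

The adversary inserts `q - 2` updates of the root, which is never active, before every useful
update. With constant priorities an inactive edge is outranked only by the at most two active
ones, so these choices are legal for a `q`-relaxed scheduler; every `q` consecutive updates
still contain a useful one, and the total number of updates is `(q - 1) n ≥ q n / 2`.
-/

namespace BPTree

variable {V : Type*} [Fintype V] [DecidableEq V] (T : BPTree V)

theorem root_notMem_children (v : V) : T.root ∉ T.children v := by
  simp [children]

theorem root_notMem_run (L : List V) : T.root ∉ T.run L := by
  suffices ∀ A : Finset V, T.root ∉ A → T.root ∉ L.foldl T.step A from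
    this _ (T.root_notMem_children _)
  induction L with
  | nil => exact fun _ hA => hA
  | cons v L ih =>
    refine fun A hA => ih _ ?_
    unfold step
    split_ifs
    · simp [hA, T.root_notMem_children v]
    · exact hA

theorem run_append_singleton (L : List V) (v : V) :
    T.run (L ++ [v]) = T.step (T.run L) v := by
  simp [run]

theorem step_run_root (L : List V) : T.step (T.run L) T.root = T.run L :=
  if_neg (T.root_notMem_run L)

theorem depth_le_depth_parent_add_one (v : V) : T.depth v ≤ T.depth (T.parent v) + 1 :=
  Nat.find_min' _ (Nat.find_spec (T.reaches (T.parent v)))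

theorem depth_le_of_parent_lt (φ : V → ℕ)
    (hφ : ∀ v, v ≠ T.root → φ (T.parent v) < φ v) (v : V) : T.depth v ≤ φ v := by
  induction h : φ v using Nat.strong_induction_on generalizing v with
  | _ k ih =>
    by_cases hv : v = T.root
    · subst hv
      exact ((Nat.find_eq_zero (T.reaches T.root)).2 rfl).trans_le (Nat.zero_le k)
    · have hlt : φ (T.parent v) < k := h ▸ hφ v hv
      calc T.depth v ≤ T.depth (T.parent v) + 1 := T.depth_le_depth_parent_add_one v
        _ ≤ φ (T.parent v) + 1 := by gcongr; exact ih _ hlt _ rfl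
        _ ≤ k := hlt

def WasteFree (U : List V) : Prop :=
  ∀ k (hk : k < U.length), U[k] ∈ T.run (U.take k)

def pad (d : ℕ) (U : List V) : List V :=
  (List.range (U.length * d)).map fun t => if d ∣ t + 1 then U.getD (t / d) T.root else T.root

variable {T} {d : ℕ} {U : List V}

@[simp]
theorem length_pad : (T.pad d U).length = U.length * d := by
  simp [pad]

theorem getElem_pad {t : ℕ} (ht : t < (T.pad d U).length) :
    (T.pad d U)[t] = if d ∣ t + 1 then U.getD (t / d) T.root else T.root := by
  simp [pad]

theorem run_take_pad (hd : 0 < d) (t : ℕ) :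
    T.run ((T.pad d U).take t) = T.run (U.take (t / d)) := by
  induction t with
  | zero => simp
  | succ t ih =>
    by_cases ht : t < U.length * d
    · have htL : t < (T.pad d U).length := by simpa using ht
      have hk : t / d < U.length := Nat.div_lt_of_lt_mul (by rwa [mul_comm] at ht)
      rw [← List.take_concat_get' _ _ htL, run_append_singleton, ih, getElem_pad]
      by_cases hdvd : d ∣ t + 1
      · rw [if_pos hdvd, Nat.succ_div_of_dvd hdvd, ← List.take_concat_get' _ _ hk,
          run_append_singleton, List.getD_eq_getElem _ _ hk]
      · rw [if_neg hdvd, Nat.succ_div_of_not_dvd hdvd, step_run_root]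
    · have hk : U.length ≤ t / d := (Nat.le_div_iff_mul_le hd).2 (not_lt.1 ht)
      have hk' : U.length ≤ (t + 1) / d := hk.trans (Nat.div_le_div_right (Nat.le_succ t))
      have hsat : (T.pad d U).take (t + 1) = (T.pad d U).take t := by
        rw [List.take_of_length_le (by simp; omega), List.take_of_length_le (by simp; omega)]
      rw [hsat, ih, List.take_of_length_le hk, List.take_of_length_le hk']

theorem run_pad (hd : 0 < d) : T.run (T.pad d U) = T.run U := by
  have h := run_take_pad (T := T) (U := U) hd (U.length * d)
  rwa [List.take_of_length_le (by simp), Nat.mul_div_cancel _ hd, List.take_length] at h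

theorem getElem_pad_mem_run_take (hU : T.WasteFree U) (hd : 0 < d) {t : ℕ}
    (ht : t < (T.pad d U).length) (hdvd : d ∣ t + 1) :
    (T.pad d U)[t] ∈ T.run ((T.pad d U).take t) := by
  have hk : t / d < U.length := Nat.div_lt_of_lt_mul (by simpa [mul_comm] using ht)
  rw [getElem_pad, if_pos hdvd, List.getD_eq_getElem _ _ hk, run_take_pad hd]
  exact hU _ hk

theorem exists_useful_pad (hU : T.WasteFree U) (hd : 0 < d) {t : ℕ}
    (ht : t + d ≤ (T.pad d U).length) :
    ∃ s, t ≤ s ∧ s < t + d ∧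
      ∃ v, (T.pad d U)[s]? = some v ∧ v ∈ T.run ((T.pad d U).take s) := by
  have hdiv := Nat.div_add_mod t d
  have hmod := Nat.mod_lt t hd
  have hs : d * (t / d) + (d - 1) < (T.pad d U).length := by omega
  refine ⟨d * (t / d) + (d - 1), by omega, by omega, _, List.getElem?_eq_getElem hs,
    getElem_pad_mem_run_take hU hd hs ⟨t / d + 1, by rw [mul_add]; omega⟩⟩

section Rank

variable (T)

theorem card_filter_keyP_lt_le_card (prio : V → ℕ) (A : Finset V) (v : V) :
    (univ.filter fun u => u ≠ T.root ∧ keyP T prio A u < keyP T prio A v).card ≤ A.card := by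
  refine card_le_card fun u hu => ?_
  by_contra huA
  have hv : keyP T prio A v ≤ (∑ w, prio w) + 1 := by
    unfold keyP
    split_ifs
    · exact (single_le_sum (fun w _ => Nat.zero_le (prio w)) (mem_univ v)).trans (Nat.le_succ _)
    · exact le_rfl
  obtain ⟨-, -, hlt⟩ := mem_filter.1 hu
  rw [keyP, if_neg huA] at hlt
  omega

theorem filter_keyP_zero_lt_eq_empty {A : Finset V} {v : V} (hv : v ∈ A) :
    (univ.filter fun u => u ≠ T.root ∧ keyP T (fun _ => 0) A u < keyP T (fun _ => 0) A v) =
      ∅ := by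
  simp [keyP, hv]

variable {T}

theorem card_filter_keyP_pad_lt (hU : T.WasteFree U) (hd : 0 < d)
    (hcard : ∀ k, (T.run (U.take k)).card ≤ 2) (t : Fin (T.pad d U).length) :
    (univ.filter fun u => u ≠ T.root ∧
      keyP T (fun _ => 0) (T.run ((T.pad d U).take t)) u
        < keyP T (fun _ => 0) (T.run ((T.pad d U).take t)) ((T.pad d U).get t)).card < d + 1 := by
  by_cases hdvd : d ∣ t + 1
  · rw [List.get_eq_getElem,
      filter_keyP_zero_lt_eq_empty T (getElem_pad_mem_run_take hU hd t.isLt hdvd), card_empty]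
    omega
  · have hd1 : d ≠ 1 := by rintro rfl; exact hdvd (one_dvd _)
    have hA : (T.run ((T.pad d U).take t)).card ≤ 2 := by
      rw [run_take_pad hd]
      exact hcard _
    have := card_filter_keyP_lt_le_card T (fun _ => 0) (T.run ((T.pad d U).take t))
      ((T.pad d U).get t)
    omega

end Rank

section ParentLt

variable {n : ℕ} (p : Fin (n + 1) → Fin (n + 1))

theorem exists_iterate_eq_zero_of_parent_lt (hlt : ∀ v, v ≠ 0 → p v < v) (v : Fin (n + 1)) :
    ∃ k, p^[k] v = 0 := by
  induction v using WellFoundedLT.induction with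
  | _ v ih =>
    by_cases hv : v = 0
    · exact ⟨0, hv⟩
    · obtain ⟨k, hk⟩ := ih (p v) (hlt v hv)
      exact ⟨k + 1, hk⟩

def ofParentLt (hp0 : p 0 = 0) (hlt : ∀ v, v ≠ 0 → p v < v) : BPTree (Fin (n + 1)) where
  root := 0
  parent := p
  parent_root := hp0
  reaches := exists_iterate_eq_zero_of_parent_lt p hlt

def ascending (n : ℕ) : List (Fin (n + 1)) :=
  (List.finRange n).map Fin.succ

@[simp]
theorem length_ascending : (ascending n).length = n := by
  simp [ascending]

theorem getElem_ascending {k : ℕ} (hk : k < (ascending n).length) :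
    (ascending n)[k] = ⟨k + 1, by simp at hk; omega⟩ := by
  simp [ascending]

def frontierAfter (s : ℕ) : Finset (Fin (n + 1)) :=
  univ.filter fun v => s < (v : ℕ) ∧ (p v : ℕ) ≤ s

theorem frontierAfter_eq_empty {s : ℕ} (hs : n ≤ s) : frontierAfter p s = ∅ := by
  ext v
  simp only [frontierAfter, mem_filter, mem_univ, true_and, notMem_empty, iff_false, not_and]
  omega

theorem mem_frontierAfter_succ (hlt : ∀ v, v ≠ 0 → p v < v) {s : ℕ} (hs : s < n) :
    (⟨s + 1, by omega⟩ : Fin (n + 1)) ∈ frontierAfter p s := by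
  have := hlt ⟨s + 1, by omega⟩ (by simp [Fin.ext_iff])
  simp only [frontierAfter, mem_filter, mem_univ, true_and, Fin.lt_def] at this ⊢
  omega

variable (hp0 : p 0 = 0) (hlt : ∀ v, v ≠ 0 → p v < v)

theorem run_ofParentLt_take_ascending (s : ℕ) :
    (ofParentLt p hp0 hlt).run ((ascending n).take s) = frontierAfter p s := by
  induction s with
  | zero =>
    ext v
    simp only [List.take_zero, run, init, children, ofParentLt, frontierAfter, List.foldl_nil,
      mem_filter, mem_univ, true_and, ne_eq, Fin.ext_iff, Fin.val_zero]
    omega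
  | succ s ih =>
    by_cases hs : s < n
    · rw [← List.take_concat_get' (ascending n) s (by simpa using hs), run_append_singleton, ih,
        getElem_ascending]
      rw [step, if_pos (mem_frontierAfter_succ p hlt hs)]
      ext v
      have hv : v ≠ 0 → p v < v := hlt v
      simp only [children, ofParentLt, frontierAfter, mem_union, mem_erase,
        mem_filter, mem_univ, true_and, ne_eq, Fin.ext_iff, Fin.lt_def, Fin.val_zero] at hv ⊢
      omega
    · have hsat : (ascending n).take (s + 1) = (ascending n).take s := by
        rw [List.take_of_length_le (by simp; omega), List.take_of_length_le (by simp; omega)]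
      rw [hsat, ih, frontierAfter_eq_empty p (by omega), frontierAfter_eq_empty p (by omega)]

theorem wasteFree_ascending : (ofParentLt p hp0 hlt).WasteFree (ascending n) := by
  intro k hk
  rw [run_ofParentLt_take_ascending, getElem_ascending]
  exact mem_frontierAfter_succ p hlt (by simpa using hk)

theorem run_ofParentLt_ascending : (ofParentLt p hp0 hlt).run (ascending n) = ∅ := by
  rw [← frontierAfter_eq_empty p le_rfl, ← run_ofParentLt_take_ascending,
    List.take_of_length_le (by simp)]

end ParentLt

section Comb

variable (b : ℕ) {n : ℕ}

/-- Labels `(b + 1) * i` form the spine; the side path of spine vertex `(b + 1) * i` is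
`(b + 1) * i + 1, …, (b + 1) * i + b`. -/
def combParent (v : Fin (n + 1)) : Fin (n + 1) :=
  ⟨if (v : ℕ) % (b + 1) = 0 then v - (b + 1) else v - 1, by split_ifs <;> omega⟩

theorem combParent_zero : combParent b (0 : Fin (n + 1)) = 0 := by
  ext
  simp [combParent]

theorem combParent_lt (v : Fin (n + 1)) (hv : v ≠ 0) : combParent b v < v := by
  rw [Ne, Fin.ext_iff, Fin.val_zero] at hv
  rw [Fin.lt_def, combParent, Fin.val_mk]
  split_ifs <;> omega

def comb (n : ℕ) : BPTree (Fin (n + 1)) :=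
  ofParentLt (combParent b) (combParent_zero b) (combParent_lt b)

theorem combParent_div_add_mod_lt (v : Fin (n + 1)) (hv : v ≠ 0) :
    (combParent b v : ℕ) / (b + 1) + (combParent b v : ℕ) % (b + 1) <
      v / (b + 1) + v % (b + 1) := by
  rw [Ne, Fin.ext_iff, Fin.val_zero] at hv
  rw [combParent, Fin.val_mk]
  generalize (v : ℕ) = x at hv ⊢
  obtain ⟨a, r, hr, rfl⟩ : ∃ a r, r < b + 1 ∧ x = (b + 1) * a + r :=
    ⟨x / (b + 1), x % (b + 1), Nat.mod_lt _ (by omega), (Nat.div_add_mod x (b + 1)).symm⟩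
  rw [Nat.mul_add_div (by omega), Nat.div_eq_of_lt hr, add_zero, Nat.mul_add_mod,
    Nat.mod_eq_of_lt hr]
  split_ifs with hr0
  · subst hr0
    obtain ⟨a, rfl⟩ : ∃ a', a = a' + 1 :=
      Nat.exists_eq_add_one.2 (Nat.pos_of_ne_zero fun ha => by simp [ha] at hv)
    rw [add_zero, mul_add_one, Nat.add_sub_cancel, Nat.mul_div_cancel_left _ (by omega),
      Nat.mul_mod_right]
    omega
  · rw [show (b + 1) * a + r - 1 = (b + 1) * a + (r - 1) by omega, Nat.mul_add_div (by omega),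
      Nat.div_eq_of_lt (by omega), Nat.mul_add_mod, Nat.mod_eq_of_lt (by omega)]
    omega

theorem depth_comb_le (v : Fin (n + 1)) :
    (comb b n).depth v ≤ v / (b + 1) + v % (b + 1) :=
  depth_le_of_parent_lt _ (fun v : Fin (n + 1) => v / (b + 1) + v % (b + 1))
    (combParent_div_add_mod_lt b) v

theorem depth_comb_sqrt_le (v : Fin (n + 1)) : (comb n.sqrt n).depth v ≤ 2 * n.sqrt := by
  have hdiv : (v : ℕ) / (n.sqrt + 1) ≤ n.sqrt := Nat.lt_succ_iff.1 <|
    (Nat.div_lt_iff_lt_mul (by omega)).2 ((Nat.lt_succ_sqrt n).trans_le' (by omega))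
  have hmod := Nat.mod_lt (v : ℕ) (show 0 < n.sqrt + 1 by omega)
  have := depth_comb_le n.sqrt v
  omega

theorem card_frontierAfter_combParent_le (s : ℕ) :
    (frontierAfter (combParent b (n := n)) s).card ≤ 2 := by
  rw [← card_image_of_injective _ Fin.val_injective]
  refine (card_le_card fun x hx => ?_).trans
    (card_le_two (a := s + 1) (b := (b + 1) * ((s + b + 1) / (b + 1))))
  obtain ⟨v, hv, rfl⟩ := mem_image.1 hx
  rw [frontierAfter, mem_filter] at hv
  simp only [combParent] at hv
  rw [mem_insert, mem_singleton]
  split_ifs at hv with hv0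
  · right
    obtain ⟨k, hk⟩ := Nat.dvd_of_mod_eq_zero hv0
    rw [hk, Nat.div_eq_of_lt_le (k := k) (by rw [mul_comm]; omega)
      (by rw [add_mul, mul_comm]; omega)]
  · left
    omega

theorem card_run_comb_take_ascending_le (k : ℕ) :
    ((comb b n).run ((ascending n).take k)).card ≤ 2 := by
  rw [comb, run_ofParentLt_take_ascending]
  exact card_frontierAfter_combParent_le b k

end Comb

end BPTree

open BPTree

open Classical in
/-- for every `q ≥ 2` and infinitely many `n` there is a rooted
tree with `Θ(n)` vertices (here exactly `n + 1`) and height `O(√n)`, edge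
priorities, and an adversarial execution that is legitimate for a `q`-relaxed
scheduler (rank bound `hrank` and the `q`-fairness consequence that every `q`
consecutive updates contain a useful one), converges, keeps the frontier of
size at most `4` throughout, and performs `Ω(q · n)` updates in total. -/
theorem stmt5 :
    ∃ c : ℕ, 0 < c ∧ ∀ q : ℕ, 2 ≤ q → ∀ N : ℕ, ∃ n, N ≤ n ∧
      ∃ (T : BPTree (Fin (n + 1))) (prio : Fin (n + 1) → ℕ) (L : List (Fin (n + 1))),
        T.run L = ∅ ∧
        (∀ v, T.depth v ≤ c * (Nat.sqrt n + 1)) ∧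
        (∀ t, (T.run (L.take t)).card ≤ 4) ∧
        (∀ t : Fin L.length,
          (Finset.univ.filter fun u => u ≠ T.root ∧
              keyP T prio (T.run (L.take (t : ℕ))) u
                < keyP T prio (T.run (L.take (t : ℕ))) (L.get t)).card < q) ∧
        (∀ t, t + q ≤ L.length →
          ∃ s, t ≤ s ∧ s < t + q ∧ ∃ v, L[s]? = some v ∧ v ∈ T.run (L.take s)) ∧
        q * n ≤ c * L.length := by
  refine ⟨2, two_pos, fun q hq N => ⟨N, le_rfl, ?_⟩⟩
  have hd : 0 < q - 1 := by omega
  have hU : (comb N.sqrt N).WasteFree (ascending N) := wasteFree_ascending _ _ _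
  have hcard := card_run_comb_take_ascending_le N.sqrt (n := N)
  refine ⟨comb N.sqrt N, fun _ => 0, (comb N.sqrt N).pad (q - 1) (ascending N), ?_,
    fun v => ?_, fun t => ?_, fun t => ?_, fun t ht => ?_, ?_⟩
  · rw [run_pad hd]
    exact run_ofParentLt_ascending _ _ _
  · have := depth_comb_sqrt_le v
    omega
  · rw [run_take_pad hd]
    exact (hcard _).trans (by norm_num)
  · simpa [Nat.sub_add_cancel (by omega : 1 ≤ q)] using card_filter_keyP_pad_lt hU hd hcard t
  · obtain ⟨s, hts, hst, hs⟩ := exists_useful_pad hU hd (t := t) (by omega)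
    exact ⟨s, hts, by omega, hs⟩
  · rw [length_pad, length_ascending]
    calc q * N ≤ 2 * (q - 1) * N := Nat.mul_le_mul_right _ (by omega)
      _ = 2 * (N * (q - 1)) := by ring
end

section
/- Consider a set of tasks partitioned into buckets B_n, B_{n-1}, …, indexed by priority, where at most 2H buckets are nonempty, each task must be executed once with its assigned priority (a useful update), and a task's priority becomes active only after all its predecessors are done. Under a q-relaxed scheduler, the total number of updates (useful plus wasted) is at most N + 2H·q², where N is the total number of tasks. -/
/-!
A request either performs a useful update, and each task is updated usefully once, or it is
wasted. Group the wasted requests by the top bucket `b` at the time they happen. At the first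
wasted request of that group fewer than `q` tasks of `b` are pending, since otherwise the
scheduler would have returned one of them. From then on `q`-fairness completes a task of `b`
every `q` requests for as long as `b` is the top bucket, so `b` stays on top for fewer than
`q · q` further requests. Hence each of the at most `2H` buckets accounts for at most `q²`
wasted requests.
-/

open Finset

theorem List.getElem_mem_take {α : Type*} (l : List α) {i j : ℕ} (hij : i < j)
    (hi : i < l.length) : l[i] ∈ l.take j :=
  List.mem_take_iff_getElem.2 ⟨i, by omega, rfl⟩

theorem List.card_filter_get_notMem_take_le {α : Type*} [DecidableEq α] (l : List α) :
    #(univ.filter fun t : Fin l.length => l.get t ∉ l.take t) ≤ l.toFinset.card := by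
  refine card_le_card_of_injOn l.get (fun t _ => List.mem_toFinset.2 (l.get_mem t)) ?_
  have key : ∀ i j : Fin l.length, l.get j ∉ l.take j → i < j → l.get i ≠ l.get j :=
    fun i j hj hij hget => hj (hget ▸ l.getElem_mem_take hij i.isLt)
  intro i hi j hj hget
  rcases lt_trichotomy i j with h | h | h
  · exact absurd hget (key i j (Finset.mem_filter.1 hj).2 h)
  · exact h
  · exact absurd hget.symm (key j i (Finset.mem_filter.1 hi).2 h)

theorem Antitone.lt_add_mul_of_forall_add_lt {f : ℕ → ℕ} (hf : Antitone f) {q t₀ n : ℕ}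
    (hstep : ∀ s, t₀ ≤ s → s + q ≤ n → f (s + q) < f s) (hn : 0 < f n) :
    n < t₀ + f t₀ * q := by
  have hdrop : ∀ k, t₀ + k * q ≤ n → f (t₀ + k * q) + k ≤ f t₀ := by
    intro k
    induction k with
    | zero => simp
    | succ k ih =>
      intro hk
      have hshift : t₀ + (k + 1) * q = t₀ + k * q + q := by ring
      rw [hshift] at hk ⊢
      have := hstep (t₀ + k * q) (Nat.le_add_right _ _) hk
      have := ih (by omega)
      omega
  by_contra! h
  have := hdrop (f t₀) h
  have := hf h
  omega

namespace BucketSchedule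

variable {τ : Type*} [Fintype τ] [DecidableEq τ] (bucket : τ → ℕ) (R : List τ)

def pending (t : ℕ) : Finset τ := {v | v ∉ R.take t}

def topBucket (t : ℕ) : ℕ := (pending R t).sup bucket

def bucketPending (b t : ℕ) : Finset τ := {v ∈ pending R t | bucket v = b}

/-- Reducible, so that `#{v | IsTop bucket R t v}` is elaborated with the same decidability
instance as the unfolded predicate. -/
abbrev IsTop (t : ℕ) (v : τ) : Prop := v ∉ R.take t ∧ ∀ u, u ∉ R.take t → bucket u ≤ bucket v

def IsRankRelaxed (q : ℕ) : Prop :=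
  ∀ t : Fin R.length, q ≤ #{v | IsTop bucket R t v} → IsTop bucket R t (R.get t)

def IsFair (q : ℕ) : Prop :=
  ∀ (t : ℕ) (v : τ), v ∉ R.take t → (∀ u, u ∉ R.take t → bucket u ≤ bucket v) →
    t + q ≤ R.length → ∃ s, t ≤ s ∧ s < t + q ∧ ∃ w, R[s]? = some w ∧ IsTop bucket R s w

def wastedSteps : Finset (Fin R.length) := {t | R.get t ∈ R.take t}

variable {bucket R}

theorem mem_pending {t : ℕ} {v : τ} : v ∈ pending R t ↔ v ∉ R.take t := by
  simp [pending]

theorem mem_bucketPending {b t : ℕ} {v : τ} :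
    v ∈ bucketPending bucket R b t ↔ v ∉ R.take t ∧ bucket v = b := by
  simp [bucketPending, mem_pending]

theorem pending_antitone : Antitone (pending R) :=
  fun _ _ hst _ hv => mem_pending.2 fun h => mem_pending.1 hv (R.take_subset_take_left hst h)

theorem topBucket_antitone : Antitone (topBucket bucket R) :=
  fun _ _ hst => sup_mono (pending_antitone hst)

theorem bucketPending_antitone (b : ℕ) : Antitone (bucketPending bucket R b) :=
  fun _ _ hst => filter_subset_filter _ (pending_antitone hst)

theorem le_topBucket {t : ℕ} {v : τ} (hv : v ∉ R.take t) : bucket v ≤ topBucket bucket R t :=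
  le_sup (mem_pending.2 hv)

theorem exists_bucket_eq_topBucket {t : ℕ} (ht : (pending R t).Nonempty) :
    ∃ v, v ∉ R.take t ∧ bucket v = topBucket bucket R t := by
  obtain ⟨v, hv, hvb⟩ := exists_mem_eq_sup (pending R t) ht bucket
  exact ⟨v, mem_pending.1 hv, hvb.symm⟩

theorem isTop_iff {t : ℕ} {v : τ} :
    IsTop bucket R t v ↔ v ∉ R.take t ∧ bucket v = topBucket bucket R t := by
  constructor
  · rintro ⟨hv, htop⟩
    obtain ⟨u, hu, hub⟩ := exists_bucket_eq_topBucket (bucket := bucket) ⟨v, mem_pending.2 hv⟩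
    exact ⟨hv, le_antisymm (le_topBucket hv) (hub ▸ htop u hu)⟩
  · rintro ⟨hv, hvb⟩
    exact ⟨hv, fun u hu => hvb ▸ le_topBucket hu⟩

theorem filter_isTop_eq (t : ℕ) :
    ({v | IsTop bucket R t v} : Finset τ) = bucketPending bucket R (topBucket bucket R t) t := by
  ext v
  simp only [mem_filter, mem_univ, true_and, mem_bucketPending, isTop_iff]

theorem card_bucketPending_add_lt {q s b : ℕ} (hfair : IsFair bucket R q)
    (hlen : s + q ≤ R.length) (hb : ∀ s', s ≤ s' → s' ≤ s + q → topBucket bucket R s' = b)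
    (hne : (bucketPending bucket R b s).Nonempty) :
    #(bucketPending bucket R b (s + q)) < #(bucketPending bucket R b s) := by
  obtain ⟨v, hv⟩ := hne
  obtain ⟨hv_pending, hvb⟩ := mem_bucketPending.1 hv
  have hv_top : IsTop bucket R s v :=
    isTop_iff.2 ⟨hv_pending, hvb.trans (hb s le_rfl (Nat.le_add_right s q)).symm⟩
  obtain ⟨s', hss', hs's, w, hw, hw_top⟩ := hfair s v hv_top.1 hv_top.2 hlen
  obtain ⟨hs'len, rfl⟩ := List.getElem?_eq_some_iff.1 hw
  have hw_mem : R[s'] ∈ bucketPending bucket R b s :=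
    mem_bucketPending.2 ⟨fun h => hw_top.1 (R.take_subset_take_left hss' h),
      (isTop_iff.1 hw_top).2.trans (hb s' hss' hs's.le)⟩
  have hw_done : R[s'] ∈ R.take (s + q) := R.getElem_mem_take hs's hs'len
  calc #(bucketPending bucket R b (s + q))
      ≤ #((bucketPending bucket R b s).erase R[s']) := by
        refine card_le_card fun u hu => mem_erase.2 ⟨?_, bucketPending_antitone b (by omega) hu⟩
        rintro rfl
        exact (mem_bucketPending.1 hu).1 hw_done
    _ < #(bucketPending bucket R b s) := card_erase_lt_of_mem hw_mem

theorem topBucket_mem_image {t : ℕ} (ht : (pending R t).Nonempty) :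
    topBucket bucket R t ∈ univ.image bucket := by
  obtain ⟨v, -, hvb⟩ := exists_bucket_eq_topBucket (bucket := bucket) ht
  exact mem_image.2 ⟨v, mem_univ v, hvb⟩

theorem lt_add_sq_of_wasted {q : ℕ} (hrank : IsRankRelaxed bucket R q)
    (hfair : IsFair bucket R q) (hpending : ∀ t, t < R.length → ∃ v, v ∉ R.take t)
    {t₀ t : Fin R.length} (hwasted : t₀ ∈ wastedSteps R)
    (hb : topBucket bucket R t₀ = topBucket bucket R t) : (t : ℕ) < t₀ + q ^ 2 := by
  set b := topBucket bucket R t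
  have hfew : #(bucketPending bucket R b t₀) < q := by
    by_contra! h
    rw [← hb, ← filter_isTop_eq] at h
    exact (hrank t₀ h).1 (Finset.mem_filter.1 hwasted).2
  have hstays : ∀ s, (t₀ : ℕ) ≤ s → s ≤ t → topBucket bucket R s = b := fun s h₀ h =>
    le_antisymm (hb ▸ topBucket_antitone h₀) (topBucket_antitone h)
  have hne : (bucketPending bucket R b t).Nonempty := by
    obtain ⟨v, hv⟩ := hpending t t.isLt
    obtain ⟨u, hu, hub⟩ := exists_bucket_eq_topBucket (bucket := bucket) ⟨v, mem_pending.2 hv⟩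
    exact ⟨u, mem_bucketPending.2 ⟨hu, hub⟩⟩
  have hphase : (t : ℕ) < t₀ + #(bucketPending bucket R b t₀) * q := by
    refine Antitone.lt_add_mul_of_forall_add_lt
      (fun _ _ h => card_le_card (bucketPending_antitone b h)) (fun s hs hsq => ?_)
      (card_pos.2 hne)
    exact card_bucketPending_add_lt hfair (by omega)
      (fun s' h₀ h => hstays s' (by omega) (by omega))
      (hne.mono (bucketPending_antitone b (by omega)))
  have : #(bucketPending bucket R b t₀) * q ≤ q ^ 2 := by
    rw [sq]; exact Nat.mul_le_mul_right q hfew.le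
  omega

theorem card_wasted_filter_topBucket_le {q : ℕ} (hrank : IsRankRelaxed bucket R q)
    (hfair : IsFair bucket R q) (hpending : ∀ t, t < R.length → ∃ v, v ∉ R.take t) (b : ℕ) :
    #(wastedSteps R |>.filter fun t : Fin R.length => topBucket bucket R t = b) ≤ q ^ 2 := by
  set W := wastedSteps R |>.filter fun t : Fin R.length => topBucket bucket R t = b
  rcases W.eq_empty_or_nonempty with hW | hW
  · simp [hW]
  obtain ⟨h₀, hb₀⟩ := Finset.mem_filter.1 (W.min'_mem hW)
  calc #W ≤ #(Ico (W.min' hW : ℕ) (W.min' hW + q ^ 2)) := by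
        refine card_le_card_of_injOn (fun t => (t : ℕ)) (fun t ht => mem_Ico.2 ⟨W.min'_le t ht, ?_⟩)
          Fin.val_injective.injOn
        exact lt_add_sq_of_wasted hrank hfair hpending h₀ (hb₀.trans (Finset.mem_filter.1 ht).2.symm)
    _ = q ^ 2 := by simp

theorem card_wastedSteps_le {q : ℕ} (hrank : IsRankRelaxed bucket R q)
    (hfair : IsFair bucket R q) (hpending : ∀ t, t < R.length → ∃ v, v ∉ R.take t) :
    #(wastedSteps R) ≤ q ^ 2 * #(univ.image bucket) := by
  refine card_le_mul_card_image_of_maps_to (f := fun t : Fin R.length => topBucket bucket R t)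
    (fun t _ => topBucket_mem_image ?_) (q ^ 2)
    fun b _ => card_wasted_filter_topBucket_le hrank hfair hpending b
  obtain ⟨v, hv⟩ := hpending t t.isLt
  exact ⟨v, mem_pending.2 hv⟩

end BucketSchedule

open BucketSchedule

open Classical in
theorem stmt8_general {τ : Type*} [Fintype τ] [DecidableEq τ] (q H : ℕ)
    (bucket : τ → ℕ)
    (hbuckets : (Finset.univ.image bucket).card ≤ 2 * H)
    (R : List τ)
    (hpending : ∀ t, t < R.length → ∃ v : τ, v ∉ R.take t)
    (hrank : ∀ t : Fin R.length,
      q ≤ (Finset.univ.filter fun v : τ => v ∉ R.take (t : ℕ) ∧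
            ∀ u : τ, u ∉ R.take (t : ℕ) → bucket u ≤ bucket v).card →
      (R.get t ∉ R.take (t : ℕ) ∧
        ∀ u : τ, u ∉ R.take (t : ℕ) → bucket u ≤ bucket (R.get t)))
    (hfair : ∀ (t : ℕ) (v : τ), v ∉ R.take t →
      (∀ u : τ, u ∉ R.take t → bucket u ≤ bucket v) →
      t + q ≤ R.length →
      ∃ s, t ≤ s ∧ s < t + q ∧ ∃ w : τ, R[s]? = some w ∧ w ∉ R.take s ∧
        ∀ u : τ, u ∉ R.take s → bucket u ≤ bucket w) :
    R.length ≤ Fintype.card τ + 2 * H * q ^ 2 := by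
  have hsplit :
      #(univ.filter fun t : Fin R.length => R.get t ∉ R.take t) + #(wastedSteps R) = R.length := by
    simpa [wastedSteps] using
      card_filter_add_card_filter_not (s := univ) fun t : Fin R.length => R.get t ∉ R.take t
  have huseful := (R.card_filter_get_notMem_take_le).trans R.toFinset.card_le_univ
  have hwasted := card_wastedSteps_le (q := q) hrank hfair hpending
  have : q ^ 2 * #(univ.image bucket) ≤ 2 * H * q ^ 2 := by
    rw [mul_comm]; exact Nat.mul_le_mul_right _ hbuckets
  omega

open Classical in
/-- tasks partitioned into priority buckets (at most `2H` of them
nonempty), each of which must be executed once usefully, processed under a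
`q`-relaxed scheduler.  `R` is the full sequence of returned tasks; a task is
pending at time `t` if it does not occur in `R.take t` (its useful update has
not yet happened).  `hrank` states that whenever at least `q` pending tasks of
the current top bucket exist, the request returns one of them; `hfair` is
`q`-fairness: a pending top-bucket task exists among the next `q` returns.
Then the total number of updates is at most `N + 2H·q²`. -/
theorem stmt8 {τ : Type*} [Fintype τ] [DecidableEq τ] (q H : ℕ) (hq : 1 ≤ q)
    (bucket : τ → ℕ)
    (hbuckets : (Finset.univ.image bucket).card ≤ 2 * H)
    (R : List τ)
    (hall : ∀ v : τ, v ∈ R)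
    (hpending : ∀ t, t < R.length → ∃ v : τ, v ∉ R.take t)
    (hrank : ∀ t : Fin R.length,
      q ≤ (Finset.univ.filter fun v : τ => v ∉ R.take (t : ℕ) ∧
            ∀ u : τ, u ∉ R.take (t : ℕ) → bucket u ≤ bucket v).card →
      (R.get t ∉ R.take (t : ℕ) ∧
        ∀ u : τ, u ∉ R.take (t : ℕ) → bucket u ≤ bucket (R.get t)))
    (hfair : ∀ (t : ℕ) (v : τ), v ∉ R.take t →
      (∀ u : τ, u ∉ R.take t → bucket u ≤ bucket v) →
      t + q ≤ R.length →
      ∃ s, t ≤ s ∧ s < t + q ∧ ∃ w : τ, R[s]? = some w ∧ w ∉ R.take s ∧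
        ∀ u : τ, u ∉ R.take s → bucket u ≤ bucket w) :
    R.length ≤ Fintype.card τ + 2 * H * q ^ 2 :=
  stmt8_general q H bucket hbuckets R hpending hrank hfair
end

section
/- The relaxed version of the optimal tree schedule, executed with a q-relaxed scheduler, performs at most O(n + q²·H) total message updates before every message has received its useful update, where n is the number of vertices and H the height of the tree. -/
/-!
A useful update is the first occurrence of its message in `R`, so there are at most `card M`
of them. A wasted update at time `t` happens only when the top bucket holds fewer than `q`
pending messages. Let `v` be pending in the top bucket at `t`: until `v` is updated the top
bucket value cannot drop, so the set of top messages only shrinks, and by `q`-fairness (or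
the update of `v` itself) a useful top update follows within `q` steps, still with fewer
than `q` top messages. Along useful top updates the pair (top bucket value, number of top
messages) strictly decreases lexicographically, so there are at most `2H (q - 1)` of them
with fewer than `q` top messages, and each is preceded by at most `q - 1` wasted updates:
`|R| ≤ 2 (n - 1) + 2H (q - 1)²`.
-/

open Finset

theorem Finset.card_le_card_mul_of_forall_exists_near {A B : Finset ℕ} {q : ℕ}
    (h : ∀ t ∈ A, ∃ s ∈ B, t < s ∧ s < t + q) : #A ≤ #B * (q - 1) :=
  calc #A ≤ #(B.biUnion fun s => Ico (s + 1 - q) s) := card_le_card fun t ht => by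
        obtain ⟨s, hs, hts, hsq⟩ := h t ht
        exact mem_biUnion.2 ⟨s, hs, mem_Ico.2 ⟨by omega, hts⟩⟩
    _ ≤ #B * (q - 1) := card_biUnion_le_card_mul _ _ _ fun s _ => by
        rw [Nat.card_Ico]
        omega

theorem List.notMem_take_of_le {α : Type*} {l : List α} {a : α} {m n : ℕ} (hmn : m ≤ n)
    (h : a ∉ l.take n) : a ∉ l.take m :=
  fun ha => h (l.take_subset_take_left hmn ha)

theorem List.mem_take_of_getElem?_eq {α : Type*} {l : List α} {a : α} {t n : ℕ}
    (h : l[t]? = some a) (htn : t < n) : a ∈ l.take n := by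
  obtain ⟨ht, rfl⟩ := List.getElem?_eq_some_iff.mp h
  exact List.mem_take_iff_getElem.mpr ⟨t, by omega, rfl⟩

theorem List.idxOf_eq_of_getElem?_eq {α : Type*} [DecidableEq α] {l : List α} {a : α} {t : ℕ}
    (h : l[t]? = some a) (ha : a ∉ l.take t) : l.idxOf a = t := by
  have hle := List.mem_take_of_getElem?_eq h t.lt_succ_self
  rw [List.mem_take_iff_idxOf_lt (List.mem_of_getElem? h)] at ha hle
  omega

namespace RelaxedSchedule

variable {M : Type*} (bucket : M → ℕ) (R : List M)

def IsPendingTop (t : ℕ) (v : M) : Prop :=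
  v ∉ R.take t ∧ ∀ u, u ∉ R.take t → bucket u ≤ bucket v

def IsUsefulUpdate (t : ℕ) : Prop :=
  ∃ w, R[t]? = some w ∧ w ∉ R.take t

def IsTopUpdate (t : ℕ) : Prop :=
  ∃ w, R[t]? = some w ∧ IsPendingTop bucket R t w

variable {bucket R}

theorem IsPendingTop.of_le {t s : ℕ} {v : M} (hv : IsPendingTop bucket R t v) (hts : t ≤ s)
    (hvs : v ∉ R.take s) : IsPendingTop bucket R s v :=
  ⟨hvs, fun u hu => hv.2 u (List.notMem_take_of_le hts hu)⟩

theorem IsTopUpdate.lt_length {s : ℕ} (hs : IsTopUpdate bucket R s) : s < R.length := by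
  obtain ⟨w, hw, -⟩ := hs
  exact (List.getElem?_eq_some_iff.mp hw).1

variable [DecidableEq M] [Fintype M]

variable (bucket R) in
def topBucket (t : ℕ) : ℕ :=
  ({v | v ∉ R.take t} : Finset M).sup bucket

variable (bucket R) in
def topSet (t : ℕ) : Finset M :=
  {v | v ∉ R.take t ∧ ∀ u, u ∉ R.take t → bucket u ≤ bucket v}

theorem mem_topSet {t : ℕ} {v : M} : v ∈ topSet bucket R t ↔ IsPendingTop bucket R t v := by
  simp [topSet, IsPendingTop]

theorem exists_isPendingTop {t : ℕ} (h : ∃ v, v ∉ R.take t) : ∃ v, IsPendingTop bucket R t v := by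
  obtain ⟨v, hv⟩ := h
  obtain ⟨w, hw, hmax⟩ := exists_max_image {v | v ∉ R.take t} bucket ⟨v, by simpa using hv⟩
  exact ⟨w, by simpa using hw, fun u hu => hmax u (by simpa using hu)⟩

theorem IsPendingTop.topBucket_eq {t : ℕ} {v : M} (hv : IsPendingTop bucket R t v) :
    topBucket bucket R t = bucket v :=
  le_antisymm (Finset.sup_le fun u hu => hv.2 u (by simpa using hu))
    (Finset.le_sup (f := bucket) (by simpa using hv.1))

theorem topSet_subset {t s : ℕ} {v w : M} (hv : IsPendingTop bucket R t v) (hts : t ≤ s)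
    (hw : IsPendingTop bucket R s w) (hvw : bucket v ≤ bucket w) :
    topSet bucket R s ⊆ topSet bucket R t := by
  intro x hx
  rw [mem_topSet] at hx ⊢
  refine ⟨List.notMem_take_of_le hts hx.1, fun u hu => ?_⟩
  calc bucket u ≤ bucket v := hv.2 u hu
    _ ≤ bucket w := hvw
    _ ≤ bucket x := hx.2 w hw.1

variable (bucket R) in
def potential (t : ℕ) : ℕ ×ₗ ℕ :=
  toLex (topBucket bucket R t, #(topSet bucket R t))

theorem potential_lt_of_isTopUpdate {a b : ℕ} (ha : IsTopUpdate bucket R a)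
    (hb : IsTopUpdate bucket R b) (hab : a < b) : potential bucket R b < potential bucket R a := by
  obtain ⟨v, hRa, hv⟩ := ha
  obtain ⟨w, hRb, hw⟩ := hb
  have hwv : bucket w ≤ bucket v := hv.2 w (List.notMem_take_of_le hab.le hw.1)
  rw [potential, potential, Prod.Lex.toLex_lt_toLex, hv.topBucket_eq, hw.topBucket_eq]
  rcases hwv.lt_or_eq with hlt | heq
  · exact Or.inl hlt
  · refine Or.inr ⟨heq, card_lt_card ?_⟩
    refine (ssubset_iff_of_subset (topSet_subset hv hab.le hw heq.ge)).2 ⟨v, ?_, ?_⟩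
    · exact mem_topSet.2 hv
    · exact fun hvb => (mem_topSet.1 hvb).1 (List.mem_take_of_getElem?_eq hRa hab)

variable (R) in
open Classical in
theorem card_filter_isUsefulUpdate_le :
    #{t ∈ range R.length | IsUsefulUpdate R t} ≤ Fintype.card M :=
  calc #{t ∈ range R.length | IsUsefulUpdate R t}
      ≤ #(univ.image fun w => R.idxOf w) := card_le_card fun t ht => by
        obtain ⟨w, hw, hwt⟩ := (mem_filter.1 ht).2
        exact mem_image.2 ⟨w, mem_univ w, List.idxOf_eq_of_getElem?_eq hw hwt⟩
    _ ≤ #(univ : Finset M) := card_image_le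
    _ = Fintype.card M := card_univ

open Classical in
theorem card_filter_isTopUpdate_le (q : ℕ) :
    #{s ∈ range R.length | IsTopUpdate bucket R s ∧ #(topSet bucket R s) < q} ≤
      #(univ.image bucket) * (q - 1) := by
  set S := {s ∈ range R.length | IsTopUpdate bucket R s ∧ #(topSet bucket R s) < q}
  have hanti : StrictAntiOn (potential bucket R) S := fun a ha b hb hab =>
    potential_lt_of_isTopUpdate (mem_filter.1 ha).2.1 (mem_filter.1 hb).2.1 hab
  have hmaps : ∀ s ∈ S, ofLex (potential bucket R s) ∈ univ.image bucket ×ˢ Ico 1 q := by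
    intro s hs
    obtain ⟨-, ⟨w, -, hw⟩, hcard⟩ := mem_filter.1 hs
    refine mem_product.2 ⟨?_, mem_Ico.2 ⟨card_pos.2 ⟨w, mem_topSet.2 hw⟩, hcard⟩⟩
    exact mem_image.2 ⟨w, mem_univ w, hw.topBucket_eq.symm⟩
  calc #S ≤ #(univ.image bucket ×ˢ Ico 1 q) :=
        card_le_card_of_injOn _ hmaps fun a ha b hb h => hanti.injOn ha hb (toLex.injective h)
    _ = #(univ.image bucket) * (q - 1) := by rw [card_product, Nat.card_Ico]

theorem exists_isTopUpdate_near_of_wasted {q t : ℕ} (hall : ∀ v, v ∈ R)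
    (hfair : ∀ v, IsPendingTop bucket R t v → t + q ≤ R.length →
      ∃ s, t ≤ s ∧ s < t + q ∧ IsTopUpdate bucket R s)
    (hpend : ∃ v, v ∉ R.take t) (ht : t < R.length) (hwasted : R[t] ∈ R.take t) :
    ∃ s, t < s ∧ s < t + q ∧ IsTopUpdate bucket R s ∧ topSet bucket R s ⊆ topSet bucket R t := by
  obtain ⟨v, hv⟩ := exists_isPendingTop hpend
  have hvR := hall v
  have hpend_le : ∀ s ≤ R.idxOf v, v ∉ R.take s := fun s hs h => by
    rw [List.mem_take_iff_idxOf_lt hvR] at h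
    omega
  have htj : t < R.idxOf v := by
    refine lt_of_le_of_ne (not_lt.1 fun h => hv.1 ((List.mem_take_iff_idxOf_lt hvR).2 h)) ?_
    rintro rfl
    exact hv.1 (by rwa [List.getElem_idxOf] at hwasted)
  -- while `v` is pending the top bucket value is `bucket v`, so the top set can only shrink
  suffices ∃ s, t < s ∧ s ≤ R.idxOf v ∧ s < t + q ∧ IsTopUpdate bucket R s by
    obtain ⟨s, hts, hsj, hsq, w, hw, hws⟩ := this
    exact ⟨s, hts, hsq, ⟨w, hw, hws⟩, topSet_subset hv hts.le hws (hws.2 v (hpend_le s hsj))⟩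
  by_cases hjq : R.idxOf v < t + q
  · exact ⟨R.idxOf v, htj, le_rfl, hjq, v, List.getElem?_idxOf hvR,
      hv.of_le htj.le (hpend_le _ le_rfl)⟩
  · have hlen := List.idxOf_lt_length_of_mem hvR
    obtain ⟨s, hts, hsq, hs⟩ := hfair v hv (by omega)
    refine ⟨s, lt_of_le_of_ne hts ?_, by omega, hsq, hs⟩
    rintro rfl
    obtain ⟨w, hw, hwt⟩ := hs
    rw [List.getElem?_eq_getElem ht, Option.some_inj] at hw
    exact hwt.1 (hw ▸ hwasted)

end RelaxedSchedule

open RelaxedSchedule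

open Classical in
/-- `R` lists the updated messages in order; an update is useful iff it is the first
occurrence of its message, so `v ∉ R.take t` says that `v` is still pending at time `t`. -/
theorem stmt10_general {M : Type*} [Fintype M] [DecidableEq M] (q H n : ℕ)
    (hM : Fintype.card M = 2 * (n - 1))
    (bucket : M → ℕ)
    (hbuckets : (Finset.univ.image bucket).card ≤ 2 * H)
    (R : List M)
    (hall : ∀ v : M, v ∈ R)
    (hpending : ∀ t, t < R.length → ∃ v : M, v ∉ R.take t)
    (hrank : ∀ t : Fin R.length,
      q ≤ (Finset.univ.filter fun v : M => v ∉ R.take (t : ℕ) ∧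
            ∀ u : M, u ∉ R.take (t : ℕ) → bucket u ≤ bucket v).card →
      (R.get t ∉ R.take (t : ℕ) ∧
        ∀ u : M, u ∉ R.take (t : ℕ) → bucket u ≤ bucket (R.get t)))
    (hfair : ∀ (t : ℕ) (v : M), v ∉ R.take t →
      (∀ u : M, u ∉ R.take t → bucket u ≤ bucket v) →
      t + q ≤ R.length →
      ∃ s, t ≤ s ∧ s < t + q ∧ ∃ w : M, R[s]? = some w ∧ w ∉ R.take s ∧
        ∀ u : M, u ∉ R.take s → bucket u ≤ bucket w) :
    R.length ≤ 4 * (n + q ^ 2 * H) := by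
  set S := {s ∈ range R.length | IsTopUpdate bucket R s ∧ #(topSet bucket R s) < q}
  have hwasted :
      ∀ t ∈ {t ∈ range R.length | ¬IsUsefulUpdate R t}, ∃ s ∈ S, t < s ∧ s < t + q := by
    intro t ht
    obtain ⟨ht, hnu⟩ := mem_filter.1 ht
    rw [mem_range] at ht
    have hw : R[t] ∈ R.take t := by_contra fun h => hnu ⟨_, List.getElem?_eq_getElem ht, h⟩
    have hsmall : #(topSet bucket R t) < q :=
      not_le.1 fun h => (hrank ⟨t, ht⟩ h).1 hw
    obtain ⟨s, hts, hsq, hs, hsub⟩ := exists_isTopUpdate_near_of_wasted hall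
      (fun v hv => hfair t v hv.1 hv.2) (hpending t ht) ht hw
    exact ⟨s, mem_filter.2 ⟨mem_range.2 hs.lt_length, hs, (card_le_card hsub).trans_lt hsmall⟩,
      hts, hsq⟩
  calc R.length = #{t ∈ range R.length | IsUsefulUpdate R t} +
        #{t ∈ range R.length | ¬IsUsefulUpdate R t} := by
        rw [card_filter_add_card_filter_not, card_range]
    _ ≤ Fintype.card M + #S * (q - 1) :=
        add_le_add (card_filter_isUsefulUpdate_le R)
          (card_le_card_mul_of_forall_exists_near hwasted)
    _ ≤ 2 * (n - 1) + 2 * H * (q - 1) * (q - 1) := by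
        rw [hM]
        gcongr
        exact (card_filter_isTopUpdate_le q).trans (Nat.mul_le_mul_right _ hbuckets)
    _ ≤ 2 * n + 2 * H * q * q := by gcongr <;> omega
    _ ≤ 4 * (n + q ^ 2 * H) := by nlinarith

open Classical in
/-- the relaxed version of the optimal tree schedule.  The
`2(n-1)` directed messages of a tree with `n` vertices are partitioned into at
most `2H` priority buckets (`H` the height); a message is pending at time `t`
if its useful update has not yet occurred in the execution `R`, and by the
schedule's structure, under a `q`-relaxed scheduler, whenever at least `q`
pending messages of the current top bucket exist the request returns one of
them (`hrank`), and a pending top-bucket message is returned within `q`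
requests (`hfair`, `q`-fairness).  Then the total number of message updates
performed before every message has received its useful update is
`O(n + q²·H)` — concretely at most `4 * (n + q² * H)`. -/
theorem stmt10 {M : Type*} [Fintype M] [DecidableEq M] (q H n : ℕ) (hq : 1 ≤ q)
    (hM : Fintype.card M = 2 * (n - 1))
    (bucket : M → ℕ)
    (hbuckets : (Finset.univ.image bucket).card ≤ 2 * H)
    (R : List M)
    (hall : ∀ v : M, v ∈ R)
    (hpending : ∀ t, t < R.length → ∃ v : M, v ∉ R.take t)
    (hrank : ∀ t : Fin R.length,
      q ≤ (Finset.univ.filter fun v : M => v ∉ R.take (t : ℕ) ∧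
            ∀ u : M, u ∉ R.take (t : ℕ) → bucket u ≤ bucket v).card →
      (R.get t ∉ R.take (t : ℕ) ∧
        ∀ u : M, u ∉ R.take (t : ℕ) → bucket u ≤ bucket (R.get t)))
    (hfair : ∀ (t : ℕ) (v : M), v ∉ R.take t →
      (∀ u : M, u ∉ R.take t → bucket u ≤ bucket v) →
      t + q ≤ R.length →
      ∃ s, t ≤ s ∧ s < t + q ∧ ∃ w : M, R[s]? = some w ∧ w ∉ R.take s ∧
        ∀ u : M, u ∉ R.take s → bucket u ≤ bucket w) :
    R.length ≤ 4 * (n + q ^ 2 * H) :=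
  stmt10_general q H n hM bucket hbuckets R hall hpending hrank hfair
end
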